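/- (Existence half of Theorem 2: minimal realization.) For every causal operator T there exists a recurrent realization (A_i, B_i, C_i, D_i) of T whose state sizes satisfy n_i = rank(H_i) for every 1 ≤ i ≤ ℓ−1 (with n_0 = n_ℓ = 0). -/

import Mathlib

open Matrix

/-- `stProd n A i j` is the state-transition product `A (i-1) * A (i-2) * ⋯ * A j`
(mapping `ℝ^{n j}` to `ℝ^{n i}`), with the empty product (`i = j`) equal to the identity. -/
noncomputable def stProd (n : ℕ → ℕ) (A : ∀ i : ℕ, Matrix (Fin (n (i + 1))) (Fin (n i)) ℝ) :
    (i j : ℕ) → Matrix (Fin (n i)) (Fin (n j)) ℝ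
  | 0, j =>
      if h : (0 : ℕ) = j then
        (1 : Matrix (Fin (n 0)) (Fin (n 0)) ℝ).submatrix id (Fin.cast (congrArg n h.symm))
      else 0
  | i + 1, j =>
      if h : i + 1 = j then
        (1 : Matrix (Fin (n (i + 1))) (Fin (n (i + 1))) ℝ).submatrix id
          (Fin.cast (congrArg n h.symm))
      else A i * stProd n A i j

/-- `T` is a causal operator: its `d × d` blocks `T i j` vanish above the block diagonal. -/
def IsCausal (d ℓ : ℕ) (T : ℕ → ℕ → Matrix (Fin d) (Fin d) ℝ) : Prop :=
  ∀ i j, i < ℓ → j < ℓ → i < j → T i j = 0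

/-- `(A, B, C, D)` with state sizes `n` is a recurrent realization of the causal operator `T`:
`T i i = D i` and `T i j = C i * (A (i-1) * ⋯ * A (j+1)) * B j` for `i > j`. -/
def IsRealization (d ℓ : ℕ) (T : ℕ → ℕ → Matrix (Fin d) (Fin d) ℝ) (n : ℕ → ℕ)
    (A : ∀ i : ℕ, Matrix (Fin (n (i + 1))) (Fin (n i)) ℝ)
    (B : ∀ i : ℕ, Matrix (Fin (n (i + 1))) (Fin d) ℝ)
    (C : ∀ i : ℕ, Matrix (Fin d) (Fin (n i)) ℝ)
    (D : ℕ → Matrix (Fin d) (Fin d) ℝ) : Prop :=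
  (∀ i, i < ℓ → T i i = D i) ∧
  ∀ i j, i < ℓ → j < i → T i j = C i * stProd n A i (j + 1) * B j

/-- The operator submatrix `H_i = T_{i:,:i-1}`, with rows indexed by block row `i + k`
(`k < ℓ - i`) and columns by block column `j < i`. -/
def Hmat (d ℓ : ℕ) (T : ℕ → ℕ → Matrix (Fin d) (Fin d) ℝ) (i : ℕ) :
    Matrix (Fin (ℓ - i) × Fin d) (Fin i × Fin d) ℝ :=
  fun p q => T (i + (p.1 : ℕ)) (q.1 : ℕ) p.2 q.2

/-- The observability matrix at index `i`, with block rows `C (i+k) * A (i+k-1) * ⋯ * A i`. -/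
noncomputable def Obs (d ℓ : ℕ) (n : ℕ → ℕ)
    (A : ∀ i : ℕ, Matrix (Fin (n (i + 1))) (Fin (n i)) ℝ)
    (C : ∀ i : ℕ, Matrix (Fin d) (Fin (n i)) ℝ) (i : ℕ) :
    Matrix (Fin (ℓ - i) × Fin d) (Fin (n i)) ℝ :=
  fun p s => (C (i + (p.1 : ℕ)) * stProd n A (i + (p.1 : ℕ)) i) p.2 s

/-- The controllability matrix at index `i`, with block columns `A (i-1) * ⋯ * A (j+1) * B j`. -/
noncomputable def Ctrb (d : ℕ) (n : ℕ → ℕ)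
    (A : ∀ i : ℕ, Matrix (Fin (n (i + 1))) (Fin (n i)) ℝ)
    (B : ∀ i : ℕ, Matrix (Fin (n (i + 1))) (Fin d) ℝ) (i : ℕ) :
    Matrix (Fin (n i)) (Fin i × Fin d) ℝ :=
  fun s q => (stProd n A i ((q.1 : ℕ) + 1) * B (q.1 : ℕ)) s q.2

/-
Factor every Hankel-type block `H_i = O_i K_i` through its rank, with `O_i` left-invertible and
`K_i` right-invertible. Dropping the first block row of `H_i` or the last block column of
`H_{i+1}` gives the same matrix, so `O_{i+1} K_i' = O_i' K_i`; cancelling `O_{i+1}` on the left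
shows that `A_i := K_i' R_i` satisfies `A_i K_i = K_i'`. With `B_i` the last block column of
`K_{i+1}`, induction then identifies `K_i` with the controllability matrix of `(A, B)`, and
taking `C_i` to be the first block row of `O_i` recovers `T_{ij} = C_i A_{i-1} ⋯ A_{j+1} B_j`
from the first block row of `H_i = O_i K_i`.
-/

namespace Matrix

theorem exists_rank_factorization {𝕜 m p : Type*} [Field 𝕜] [Fintype m] [Fintype p]
    (M : Matrix m p 𝕜) :
    ∃ (O : Matrix m (Fin M.rank) 𝕜) (F : Matrix (Fin M.rank) p 𝕜)
      (L : Matrix (Fin M.rank) m 𝕜) (R : Matrix p (Fin M.rank) 𝕜),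
      M = O * F ∧ L * O = 1 ∧ F * R = 1 := by
  classical
  set V := LinearMap.range M.mulVecLin
  let b : Module.Basis (Fin M.rank) 𝕜 V := Module.finBasisOfFinrankEq 𝕜 V rfl
  let bp := Pi.basisFun 𝕜 p
  let bm := Pi.basisFun 𝕜 m
  let ι : V →ₗ[𝕜] m → 𝕜 := V.subtype
  let g : (p → 𝕜) →ₗ[𝕜] V := M.mulVecLin.rangeRestrict
  obtain ⟨L, hL⟩ := ι.exists_leftInverse_of_injective V.ker_subtype
  obtain ⟨R, hR⟩ := g.exists_rightInverse_of_surjective (LinearMap.range_rangeRestrict _)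
  refine ⟨LinearMap.toMatrix b bm ι, LinearMap.toMatrix bp b g,
    LinearMap.toMatrix bm b L, LinearMap.toMatrix b bp R, ?_, ?_, ?_⟩
  · rw [← LinearMap.toMatrix_comp bp b bm, show ι.comp g = M.mulVecLin from rfl,
      ← toLin'_apply', ← toLin_eq_toLin', LinearMap.toMatrix_toLin]
  · rw [← LinearMap.toMatrix_comp b bm b, hL, LinearMap.toMatrix_id]
  · rw [← LinearMap.toMatrix_comp b bp b, hR, LinearMap.toMatrix_id]

theorem mul_mul_eq_of_mul_eq_mul {α l m p q : Type*} [Fintype l] [Fintype m]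
    [Fintype p] [Fintype q] [DecidableEq m] [DecidableEq p] [Semiring α]
    {O₁ : Matrix l m α} {L : Matrix m l α} {K₁ : Matrix m q α} {O₂ : Matrix l p α}
    {K₂ : Matrix p q α} {R : Matrix q p α}
    (hL : L * O₁ = 1) (hR : K₂ * R = 1) (h : O₁ * K₁ = O₂ * K₂) : K₁ * R * K₂ = K₁ :=
  calc K₁ * R * K₂ = L * (O₁ * K₁) * R * K₂ := by rw [← Matrix.mul_assoc, hL, Matrix.one_mul]
    _ = L * O₂ * (K₂ * R) * K₂ := by simp only [h, Matrix.mul_assoc]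
    _ = K₁ := by rw [hR, Matrix.mul_one, Matrix.mul_assoc, ← h, ← Matrix.mul_assoc, hL,
      Matrix.one_mul]

variable {α r c : Type*} {d : ℕ}

def dropLastBlockCol {i : ℕ} (M : Matrix r (Fin (i + 1) × Fin d) α) :
    Matrix r (Fin i × Fin d) α :=
  M.submatrix id (Prod.map Fin.castSucc id)

def lastBlockCol {i : ℕ} (M : Matrix r (Fin (i + 1) × Fin d) α) : Matrix r (Fin d) α :=
  M.submatrix id (Prod.mk (Fin.last i))

def dropFirstBlockRow {ℓ i : ℕ} (M : Matrix (Fin (ℓ - i) × Fin d) c α) :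
    Matrix (Fin (ℓ - (i + 1)) × Fin d) c α :=
  M.submatrix (Prod.map (fun k => ⟨k + 1, by omega⟩) id) id

def firstBlockRow {ℓ i : ℕ} (M : Matrix (Fin (ℓ - i) × Fin d) c α) (h : i < ℓ) :
    Matrix (Fin d) c α :=
  M.submatrix (Prod.mk ⟨0, by omega⟩) id

theorem ext_dropLastBlockCol_lastBlockCol {i : ℕ} {M N : Matrix r (Fin (i + 1) × Fin d) α}
    (h : M.dropLastBlockCol = N.dropLastBlockCol) (h' : M.lastBlockCol = N.lastBlockCol) :
    M = N := by
  ext s ⟨j, q⟩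
  induction j using Fin.lastCases with
  | last => exact congrFun₂ h' s q
  | cast j => exact congrFun₂ h s (j, q)

variable [Fintype r] [NonUnitalNonAssocSemiring α]

theorem dropLastBlockCol_mul {i : ℕ} (M : Matrix c r α) (N : Matrix r (Fin (i + 1) × Fin d) α) :
    (M * N).dropLastBlockCol = M * N.dropLastBlockCol :=
  rfl

theorem dropFirstBlockRow_mul {ℓ i : ℕ} (M : Matrix (Fin (ℓ - i) × Fin d) r α)
    (N : Matrix r c α) : (M * N).dropFirstBlockRow = M.dropFirstBlockRow * N :=
  rfl

end Matrix

theorem stProd_self (n : ℕ → ℕ) (A : ∀ i : ℕ, Matrix (Fin (n (i + 1))) (Fin (n i)) ℝ) (i : ℕ) :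
    stProd n A i i = 1 := by
  cases i <;>
  · rw [stProd, dif_pos rfl]
    ext a b
    simp [one_apply, Fin.ext_iff]

theorem stProd_succ (n : ℕ → ℕ) (A : ∀ i : ℕ, Matrix (Fin (n (i + 1))) (Fin (n i)) ℝ)
    {i j : ℕ} (h : i + 1 ≠ j) : stProd n A (i + 1) j = A i * stProd n A i j := by
  rw [stProd, dif_neg h]

section Ctrb

variable {d : ℕ} {n : ℕ → ℕ} (A : ∀ i : ℕ, Matrix (Fin (n (i + 1))) (Fin (n i)) ℝ)
  (B : ∀ i : ℕ, Matrix (Fin (n (i + 1))) (Fin d) ℝ)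

theorem dropLastBlockCol_Ctrb_succ (i : ℕ) :
    (Ctrb d n A B (i + 1)).dropLastBlockCol = A i * Ctrb d n A B i := by
  ext s ⟨j, q⟩
  simp only [dropLastBlockCol, Ctrb, submatrix_apply, id, Prod.map_fst, Prod.map_snd,
    Fin.val_castSucc, stProd_succ n A (show i + 1 ≠ j + 1 by omega), Matrix.mul_assoc]
  rfl

theorem lastBlockCol_Ctrb_succ (i : ℕ) : (Ctrb d n A B (i + 1)).lastBlockCol = B i := by
  ext s q
  simp [lastBlockCol, Ctrb, stProd_self]

theorem Ctrb_eq_of_mul_eq {K : ∀ i, Matrix (Fin (n i)) (Fin i × Fin d) ℝ}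
    (hA : ∀ i, A i * K i = (K (i + 1)).dropLastBlockCol)
    (hB : ∀ i, B i = (K (i + 1)).lastBlockCol) (i : ℕ) : Ctrb d n A B i = K i := by
  induction i with
  | zero => ext _ ⟨j, _⟩; exact j.elim0
  | succ i ih =>
    apply ext_dropLastBlockCol_lastBlockCol
    · rw [dropLastBlockCol_Ctrb_succ, ih, hA]
    · rw [lastBlockCol_Ctrb_succ, hB]

end Ctrb

theorem Hmat_succ_dropLastBlockCol (d ℓ : ℕ) (T : ℕ → ℕ → Matrix (Fin d) (Fin d) ℝ) (i : ℕ) :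
    (Hmat d ℓ T (i + 1)).dropLastBlockCol = (Hmat d ℓ T i).dropFirstBlockRow := by
  ext p q
  simp only [dropLastBlockCol, dropFirstBlockRow, Hmat, submatrix_apply, id, Prod.map_fst,
    Prod.map_snd, Fin.val_castSucc]
  rw [Nat.add_right_comm, Nat.add_assoc]

section Realization

variable {d ℓ : ℕ} {n : ℕ → ℕ}
  (O : ∀ i, Matrix (Fin (ℓ - i) × Fin d) (Fin (n i)) ℝ)
  (K : ∀ i, Matrix (Fin (n i)) (Fin i × Fin d) ℝ)
  (R : ∀ i, Matrix (Fin i × Fin d) (Fin (n i)) ℝ)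

noncomputable def realizationA (i : ℕ) : Matrix (Fin (n (i + 1))) (Fin (n i)) ℝ :=
  (K (i + 1)).dropLastBlockCol * R i

def realizationB (i : ℕ) : Matrix (Fin (n (i + 1))) (Fin d) ℝ :=
  (K (i + 1)).lastBlockCol

def realizationC (i : ℕ) : Matrix (Fin d) (Fin (n i)) ℝ :=
  if h : i < ℓ then (O i).firstBlockRow h else 0

variable {O K R} {T : ℕ → ℕ → Matrix (Fin d) (Fin d) ℝ}
  {L : ∀ i, Matrix (Fin (n i)) (Fin (ℓ - i) × Fin d) ℝ}

theorem realizationA_mul (hOK : ∀ i, Hmat d ℓ T i = O i * K i) (hLO : ∀ i, L i * O i = 1)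
    (hKR : ∀ i, K i * R i = 1) (i : ℕ) :
    realizationA K R i * K i = (K (i + 1)).dropLastBlockCol :=
  mul_mul_eq_of_mul_eq_mul (hLO (i + 1)) (hKR i) <| by
    rw [← dropLastBlockCol_mul, ← hOK, Hmat_succ_dropLastBlockCol, hOK, dropFirstBlockRow_mul]

theorem isRealization_of_factorization (hOK : ∀ i, Hmat d ℓ T i = O i * K i)
    (hLO : ∀ i, L i * O i = 1) (hKR : ∀ i, K i * R i = 1) :
    IsRealization d ℓ T n (realizationA K R) (realizationB K) (realizationC O)
      (fun i => T i i) := by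
  have hCtrb := Ctrb_eq_of_mul_eq (realizationA K R) (realizationB K)
    (realizationA_mul hOK hLO hKR) (fun _ => rfl)
  refine ⟨fun _ _ => rfl, fun i j hi hj => ?_⟩
  have hC : realizationC O i * Ctrb d n (realizationA K R) (realizationB K) i =
      (Hmat d ℓ T i).firstBlockRow hi := by
    rw [hCtrb, hOK, realizationC, dif_pos hi]
    rfl
  ext p q
  rw [Matrix.mul_assoc]
  exact (congrFun₂ hC p (⟨j, hj⟩, q)).symm

end Realization

theorem minimal_realization_exists_general (d ℓ : ℕ)
    (T : ℕ → ℕ → Matrix (Fin d) (Fin d) ℝ) :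
    ∃ (n : ℕ → ℕ)
      (A : ∀ i : ℕ, Matrix (Fin (n (i + 1))) (Fin (n i)) ℝ)
      (B : ∀ i : ℕ, Matrix (Fin (n (i + 1))) (Fin d) ℝ)
      (C : ∀ i : ℕ, Matrix (Fin d) (Fin (n i)) ℝ)
      (D : ℕ → Matrix (Fin d) (Fin d) ℝ),
      IsRealization d ℓ T n A B C D ∧ n 0 = 0 ∧ n ℓ = 0 ∧
        ∀ i, 1 ≤ i → i < ℓ → n i = (Hmat d ℓ T i).rank := by
  choose O K L R hOK hLO hKR using fun i => exists_rank_factorization (Hmat d ℓ T i)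
  -- `H_0` has no columns and `H_ℓ` no rows, so `n i := rank H_i` vanishes at both ends.
  refine ⟨fun i => (Hmat d ℓ T i).rank, _, _, _, _,
    isRealization_of_factorization hOK hLO hKR, ?_, ?_, fun _ _ _ => rfl⟩
  · simpa using (Hmat d ℓ T 0).rank_le_card_width
  · simpa using (Hmat d ℓ T ℓ).rank_le_card_height

/-- existence half of Theorem 2: every causal operator `T` admits a recurrent
realization whose state sizes satisfy `n i = rank H_i` for `1 ≤ i ≤ ℓ - 1`
(with `n 0 = n ℓ = 0`). -/
theorem minimal_realization_exists (d ℓ : ℕ) (hd : 1 ≤ d) (hℓ : 1 ≤ ℓ)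
    (T : ℕ → ℕ → Matrix (Fin d) (Fin d) ℝ) (hT : IsCausal d ℓ T) :
    ∃ (n : ℕ → ℕ)
      (A : ∀ i : ℕ, Matrix (Fin (n (i + 1))) (Fin (n i)) ℝ)
      (B : ∀ i : ℕ, Matrix (Fin (n (i + 1))) (Fin d) ℝ)
      (C : ∀ i : ℕ, Matrix (Fin d) (Fin (n i)) ℝ)
      (D : ℕ → Matrix (Fin d) (Fin d) ℝ),
      IsRealization d ℓ T n A B C D ∧ n 0 = 0 ∧ n ℓ = 0 ∧
        ∀ i, 1 ≤ i → i < ℓ → n i = (Hmat d ℓ T i).rank :=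
  minimal_realization_exists_general d ℓ T
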